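/- arXiv:1611.05738 — 3 statements merged into one kernel-verified Lean document; each statement's English description precedes it below -/
import Mathlib

section
/- Let ω be a positive definite density matrix on a finite-dimensional Hilbert space and H a Hermitian operator. Then the Bures norm of the Hermitian operator A = ½{⟨H⟩ − H, ω} (anticommutator), where ⟨H⟩ = Tr[Hω], satisfies ‖A‖_ω² = Tr[H²ω] − (Tr[Hω])², i.e. it equals the variance of H in the state ω. -/
/-!
In the eigenbasis of `ω`, let `B` be the (Hermitian) matrix of `M = ⟨H⟩ - H`. The entries of
`½{M, ω}` are `(p i + p j) / 2 * B i j`, so the Bures weight `2 / (p i + p j)` leaves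
`∑ (p i + p j) / 2 * |B i j|²`, which by `|B i j| = |B j i|` equals `∑ p i * |B i j|² = Tr[M² ω]`.
Expanding `M` and using `Tr ω = 1` gives `Tr[H² ω] - ⟨H⟩²`.
-/

open Finset
open scoped ComplexOrder

/-- Matrix element ⟨i|O|j⟩ in the basis `v`. -/
noncomputable def matElem {n : ℕ} (v : Fin n → (Fin n → ℂ))
    (O : Matrix (Fin n) (Fin n) ℂ) (i j : Fin n) : ℂ :=
  dotProduct (star (v i)) (O.mulVec (v j))

/-- Bures norm squared of `O` with respect to the spectral data `(p, v)`. -/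
noncomputable def buresSq {n : ℕ} (p : Fin n → ℝ) (v : Fin n → (Fin n → ℂ))
    (O : Matrix (Fin n) (Fin n) ℂ) : ℝ :=
  ∑ i, ∑ j, 2 * ‖matElem v O i j‖ ^ 2 / (p i + p j)

open Matrix

section Conjugation

variable {ι R : Type*} [Fintype ι] [DecidableEq ι] [CommSemiring R] {U V : Matrix ι ι R}

lemma mul_mul_mul_of_mul_eq_one (hUV : U * V = 1) (X Y : Matrix ι ι R) :
    V * (X * Y) * U = V * X * U * (V * Y * U) := by
  simp only [Matrix.mul_assoc, ← Matrix.mul_assoc U V, hUV, Matrix.one_mul]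

lemma trace_mul_mul_of_mul_eq_one (hUV : U * V = 1) (X : Matrix ι ι R) :
    (V * X * U).trace = X.trace := by
  rw [trace_mul_comm, ← Matrix.mul_assoc, hUV, Matrix.one_mul]

end Conjugation

section Anticommutator

variable {ι : Type*} [Fintype ι] [DecidableEq ι] {B : Matrix ι ι ℂ}

lemma trace_mul_self_mul_diagonal (hB : B.IsHermitian) (p : ι → ℝ) :
    (B * B * diagonal fun i => (p i : ℂ)).trace = ((∑ i, ∑ j, p i * ‖B i j‖ ^ 2 : ℝ) : ℂ) := by
  push_cast
  refine Finset.sum_congr rfl fun i _ => ?_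
  rw [diag_apply, mul_diagonal, mul_apply, Finset.sum_mul]
  refine Finset.sum_congr rfl fun j _ => ?_
  rw [← hB.apply j i, Complex.star_def, Complex.mul_conj, Complex.normSq_eq_norm_sq]
  push_cast
  ring

/-- Where `p i + p j = 0` both sides of the `(i, j)` term vanish, the left one because division
by zero returns `0`. -/
lemma sum_bures_anticommutator_diagonal (hB : B.IsHermitian) (p : ι → ℝ) :
    ∑ i, ∑ j, 2 * ‖((1 / 2 : ℂ) • (B * diagonal (fun i => (p i : ℂ)) +
        diagonal (fun i => (p i : ℂ)) * B)) i j‖ ^ 2 / (p i + p j) =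
      ∑ i, ∑ j, p i * ‖B i j‖ ^ 2 := by
  have hentry : ∀ i j, 2 * ‖((1 / 2 : ℂ) • (B * diagonal (fun i => (p i : ℂ)) +
      diagonal (fun i => (p i : ℂ)) * B)) i j‖ ^ 2 / (p i + p j) =
        (p i * ‖B i j‖ ^ 2 + p j * ‖B i j‖ ^ 2) / 2 := by
    intro i j
    have : ((1 / 2 : ℂ) • (B * diagonal (fun i => (p i : ℂ)) +
        diagonal (fun i => (p i : ℂ)) * B)) i j = (((p i + p j) / 2 : ℝ) : ℂ) * B i j := by
      simp only [Matrix.smul_apply, Matrix.add_apply, mul_diagonal, diagonal_mul, smul_eq_mul]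
      push_cast
      ring
    rw [this, norm_mul, Complex.norm_real, Real.norm_eq_abs, mul_pow, sq_abs]
    linear_combination (‖B i j‖ ^ 2 / 2) * mul_self_div_self (p i + p j)
  have hnorm : ∀ i j, ‖B j i‖ = ‖B i j‖ := fun i j => by rw [← hB.apply, norm_star]
  have hsymm : ∑ i, ∑ j, p j * ‖B i j‖ ^ 2 = ∑ i, ∑ j, p i * ‖B i j‖ ^ 2 := by
    rw [Finset.sum_comm]
    simp only [hnorm]
  simp only [hentry, ← Finset.sum_div, Finset.sum_add_distrib, hsymm]
  ring

end Anticommutator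

lemma trace_smul_one_sub_mul_self_mul {ι R : Type*} [Fintype ι] [DecidableEq ι] [CommRing R]
    (c : R) (H ω : Matrix ι ι R) :
    ((c • 1 - H) * (c • 1 - H) * ω).trace =
      (H * H * ω).trace - 2 * c * (H * ω).trace + c ^ 2 * ω.trace := by
  simp only [Matrix.sub_mul, Matrix.mul_sub, Matrix.smul_mul, Matrix.mul_smul, Matrix.one_mul,
    Matrix.mul_one, trace_sub, trace_smul, smul_eq_mul]
  ring

lemma Matrix.IsHermitian.coe_re_trace_mul {ι : Type*} [Fintype ι] {A B : Matrix ι ι ℂ}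
    (hA : A.IsHermitian) (hB : B.IsHermitian) : ((A * B).trace.re : ℂ) = (A * B).trace := by
  rw [← Complex.conj_eq_iff_re, ← Complex.star_def, ← trace_conjTranspose, conjTranspose_mul,
    hA.eq, hB.eq, trace_mul_comm]

lemma Matrix.IsHermitian.of_mul_eq_mul_diagonal {ι : Type*} [Fintype ι] [DecidableEq ι]
    {ω U : Matrix ι ι ℂ} {p : ι → ℝ} (hU : U * Uᴴ = 1)
    (hωU : ω * U = U * diagonal fun i => (p i : ℂ)) : ω.IsHermitian := by
  have hω : ω = U * (diagonal fun i => (p i : ℂ)) * Uᴴ := by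
    rw [← hωU, Matrix.mul_assoc, hU, Matrix.mul_one]
  rw [IsHermitian, hω, conjTranspose_mul, conjTranspose_mul, conjTranspose_conjTranspose,
    diagonal_conjTranspose, Matrix.mul_assoc]
  congr 3
  ext i
  simp

section Eigenbasis

variable {n : ℕ} {v : Fin n → Fin n → ℂ}

lemma matElem_eq_conjTranspose_mul_mul (O : Matrix (Fin n) (Fin n) ℂ) (i j : Fin n) :
    matElem v O i j = ((of v)ᵀᴴ * O * (of v)ᵀ) i j := by
  rw [mul_mul_apply]
  rfl

lemma conjTranspose_mul_self_of_orthonormal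
    (horth : ∀ i j, star (v i) ⬝ᵥ v j = if i = j then 1 else 0) : (of v)ᵀᴴ * (of v)ᵀ = 1 := by
  ext i j
  rw [one_apply, ← horth i j]
  rfl

lemma mul_eq_mul_diagonal_of_mulVec_eq_smul {ω : Matrix (Fin n) (Fin n) ℂ} {p : Fin n → ℝ}
    (heig : ∀ i, ω *ᵥ v i = (p i : ℂ) • v i) :
    ω * (of v)ᵀ = (of v)ᵀ * diagonal fun i => (p i : ℂ) := by
  ext k j
  rw [mul_diagonal]
  simpa [mulVec, dotProduct, mul_apply, mul_comm] using congrFun (heig j) k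

lemma buresSq_anticommutator {ω M : Matrix (Fin n) (Fin n) ℂ} {p : Fin n → ℝ}
    (horth : ∀ i j, star (v i) ⬝ᵥ v j = if i = j then 1 else 0)
    (heig : ∀ i, ω *ᵥ v i = (p i : ℂ) • v i) (hM : M.IsHermitian) :
    buresSq p v ((1 / 2 : ℂ) • (M * ω + ω * M)) = (M * M * ω).trace.re := by
  set U := (of v)ᵀ
  set D : Matrix (Fin n) (Fin n) ℂ := diagonal fun i => (p i : ℂ)
  have hUU' : Uᴴ * U = 1 := conjTranspose_mul_self_of_orthonormal horth
  have hUU : U * Uᴴ = 1 := mul_eq_one_comm.mp hUU'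
  have hD : Uᴴ * ω * U = D := by
    rw [Matrix.mul_assoc, mul_eq_mul_diagonal_of_mulVec_eq_smul heig, ← Matrix.mul_assoc, hUU',
      Matrix.one_mul]
  have hB : (Uᴴ * M * U).IsHermitian := isHermitian_conjTranspose_mul_mul U hM
  have hA : Uᴴ * ((1 / 2 : ℂ) • (M * ω + ω * M)) * U =
      (1 / 2 : ℂ) • (Uᴴ * M * U * D + D * (Uᴴ * M * U)) := by
    rw [Matrix.mul_smul, Matrix.smul_mul, Matrix.mul_add, Matrix.add_mul,
      mul_mul_mul_of_mul_eq_one hUU, mul_mul_mul_of_mul_eq_one hUU, hD]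
  calc buresSq p v ((1 / 2 : ℂ) • (M * ω + ω * M))
      = ∑ i, ∑ j, 2 * ‖((1 / 2 : ℂ) • (Uᴴ * M * U * D + D * (Uᴴ * M * U))) i j‖ ^ 2 /
          (p i + p j) := by
        simp only [buresSq, matElem_eq_conjTranspose_mul_mul]
        rw [hA]
    _ = (Uᴴ * M * U * (Uᴴ * M * U) * D).trace.re := by
        rw [sum_bures_anticommutator_diagonal hB, trace_mul_self_mul_diagonal hB,
          Complex.ofReal_re]
    _ = (M * M * ω).trace.re := by
        rw [← hD, ← mul_mul_mul_of_mul_eq_one hUU, ← mul_mul_mul_of_mul_eq_one hUU,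
          trace_mul_mul_of_mul_eq_one hUU]

end Eigenbasis

theorem bures_of_anticommutator_eq_variance_general {n : ℕ}
    (ω H : Matrix (Fin n) (Fin n) ℂ) (p : Fin n → ℝ) (v : Fin n → (Fin n → ℂ))
    (htr : ω.trace = 1)
    (horth : ∀ i j, dotProduct (star (v i)) (v j) = if i = j then 1 else 0)
    (heig : ∀ i, ω.mulVec (v i) = (p i : ℂ) • v i)
    (hH : H.IsHermitian) :
    buresSq p v
        ((1 / 2 : ℂ) •
          (((H * ω).trace • (1 : Matrix (Fin n) (Fin n) ℂ) - H) * ω +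
            ω * ((H * ω).trace • (1 : Matrix (Fin n) (Fin n) ℂ) - H))) =
      ((H * H * ω).trace).re - (((H * ω).trace).re) ^ 2 := by
  set c := (H * ω).trace
  have hω : ω.IsHermitian := .of_mul_eq_mul_diagonal
    (mul_eq_one_comm.mp (conjTranspose_mul_self_of_orthonormal horth))
    (mul_eq_mul_diagonal_of_mulVec_eq_smul heig)
  have hc : (c.re : ℂ) = c := hH.coe_re_trace_mul hω
  have hM : (c • 1 - H).IsHermitian := by
    simp only [IsHermitian, conjTranspose_sub, conjTranspose_smul, conjTranspose_one, hH.eq]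
    rw [← hc, Complex.star_def, Complex.conj_ofReal]
  rw [buresSq_anticommutator horth heig hM, trace_smul_one_sub_mul_self_mul, htr, ← hc]
  simp only [sq, mul_one, Complex.add_re, Complex.sub_re, Complex.mul_re, Complex.re_ofNat,
    Complex.ofReal_re, Complex.im_ofNat, Complex.ofReal_im, mul_zero, sub_zero,
    Complex.mul_im, zero_mul, add_zero]
  ring

/-- The Bures norm squared of A = ½{⟨H⟩ − H, ω} equals the variance of H in the
    state ω: Tr[H²ω] − (Tr[Hω])². -/
theorem bures_of_anticommutator_eq_variance {n : ℕ}
    (ω H : Matrix (Fin n) (Fin n) ℂ) (p : Fin n → ℝ) (v : Fin n → (Fin n → ℂ))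
    (hω : ω.PosDef) (htr : ω.trace = 1) (hp : ∀ i, 0 < p i)
    (horth : ∀ i j, dotProduct (star (v i)) (v j) = if i = j then 1 else 0)
    (heig : ∀ i, ω.mulVec (v i) = (p i : ℂ) • v i)
    (hH : H.IsHermitian) :
    buresSq p v
        ((1 / 2 : ℂ) •
          (((H * ω).trace • (1 : Matrix (Fin n) (Fin n) ℂ) - H) * ω +
            ω * ((H * ω).trace • (1 : Matrix (Fin n) (Fin n) ℂ) - H))) =
      ((H * H * ω).trace).re - (((H * ω).trace).re) ^ 2 :=
  bures_of_anticommutator_eq_variance_general ω H p v htr horth heig hH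
end

section
/- Let H_A ⊗ H_B be a finite-dimensional bipartite Hilbert space, ω a positive definite density matrix on it, ρ = Tr_B ω its reduced state on A (positive definite), and H an operator acting only on B with ‖⟨H⟩·I − H‖_∞ ≤ 2J where ⟨H⟩ = Tr[Hω]. Define B̂ = ½ Tr_B[{⟨H⟩·I − H, ω}]. Then ‖ρ^{-1/2} B̂ ρ^{-1/2}‖_∞ ≤ 2J. -/
open Finset Kronecker
open scoped ComplexOrder Matrix.Norms.L2Operator

/-- Partial trace over the second (B) factor. -/
noncomputable def ptraceB {a b : ℕ} (ω : Matrix (Fin a × Fin b) (Fin a × Fin b) ℂ) :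
    Matrix (Fin a) (Fin a) ℂ :=
  Matrix.of fun i j => ∑ k : Fin b, ω (i, k) (j, k)

/-!
Write `K = ⟨H⟩·1 − H_B`, so that `⟨H⟩·I − H = 1 ⊗ K`. For a vector `ψ` on `A` put
`φ = ρ^{-1/2} ψ` and let `V = |φ⟩ ⊗ 1_B`. Because `1 ⊗ K` acts only on `B` it moves through `V`,
which turns `⟨φ, B̂ φ⟩` into `Tr (M K)` for the positive operator `M = V† ω V` on `B`, whose trace
is `⟨φ, ρ φ⟩ = ‖ψ‖²`. From `−‖K‖ ≤ K ≤ ‖K‖` one gets `|Tr (M K)| ≤ ‖K‖ Tr M`, so the quadratic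
form of the Hermitian operator `ρ^{-1/2} B̂ ρ^{-1/2}` is bounded by `‖K‖ ‖ψ‖² ≤ 2J ‖ψ‖²`, and for a
Hermitian operator that bounds the operator norm.
-/

theorem ContinuousLinearMap.norm_le_of_abs_reApplyInnerSelf_le
    {𝕜 E : Type*} [RCLike 𝕜] [NormedAddCommGroup E] [InnerProductSpace 𝕜 E] {T : E →L[𝕜] E}
    (hT : (T : E →ₗ[𝕜] E).IsSymmetric) {c : ℝ} (hc : 0 ≤ c)
    (h : ∀ x, |T.reApplyInnerSelf x| ≤ c * ‖x‖ ^ 2) : ‖T‖ ≤ c := by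
  rw [T.norm_eq_iSup_rayleighQuotient hT]
  refine ciSup_le fun x => ?_
  rw [abs_div, abs_sq]
  exact div_le_of_le_mul₀ (sq_nonneg _) hc (h x)

namespace Matrix

section Hermitian

variable {n : Type*} [Fintype n]

theorem IsHermitian.star_dotProduct_mul_mul_mulVec {R : Type*} [CommSemiring R] [StarRing R]
    {B : Matrix n n R} (hB : B.IsHermitian) (A : Matrix n n R) (x : n → R) :
    star x ⬝ᵥ (B * A * B) *ᵥ x = star (B *ᵥ x) ⬝ᵥ A *ᵥ (B *ᵥ x) := by
  nth_rw 1 [← hB.eq]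
  simp only [star_mulVec, dotProduct_mulVec, vecMul_vecMul, Matrix.mul_assoc]

theorem IsHermitian.isSelfAdjoint_trace_mul {R : Type*} [CommSemiring R] [StarRing R]
    {A B : Matrix n n R} (hA : A.IsHermitian) (hB : B.IsHermitian) :
    IsSelfAdjoint (A * B).trace := by
  rw [IsSelfAdjoint, ← trace_conjTranspose, conjTranspose_mul, hA.eq, hB.eq, trace_mul_comm]

variable [DecidableEq n]

open WithLp in
theorem IsHermitian.norm_le_of_forall_norm_dotProduct_le {𝕜 : Type*} [RCLike 𝕜]
    {A : Matrix n n 𝕜} (hA : A.IsHermitian) {c : ℝ} (hc : 0 ≤ c)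
    (h : ∀ x : n → 𝕜, ‖star x ⬝ᵥ A *ᵥ x‖ ≤ c * RCLike.re (star x ⬝ᵥ x)) : ‖A‖ ≤ c := by
  rw [cstar_norm_def]
  refine ContinuousLinearMap.norm_le_of_abs_reApplyInnerSelf_le
    (T := toEuclideanCLM (n := n) (𝕜 := 𝕜) A)
    (by rw [coe_toEuclideanCLM_eq_toEuclideanLin]; exact isSymmetric_toEuclideanLin_iff.mpr hA)
    hc fun x => ?_
  have hinner : inner 𝕜 x (toEuclideanCLM (n := n) (𝕜 := 𝕜) A x) =
      star (ofLp x) ⬝ᵥ A *ᵥ ofLp x := by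
    rw [EuclideanSpace.inner_eq_star_dotProduct, dotProduct_comm]
    rfl
  have hnorm : ‖x‖ ^ 2 = RCLike.re (star (ofLp x) ⬝ᵥ ofLp x) := by
    rw [norm_sq_eq_re_inner (𝕜 := 𝕜), EuclideanSpace.inner_eq_star_dotProduct, dotProduct_comm]
  rw [ContinuousLinearMap.reApplyInnerSelf, ← inner_re_symm, hinner, hnorm]
  exact (RCLike.abs_re_le_norm _).trans (h (ofLp x))

open scoped MatrixOrder

theorem PosSemidef.trace_mul_nonneg {M N : Matrix n n ℂ} (hM : M.PosSemidef)
    (hN : N.PosSemidef) : 0 ≤ (M * N).trace := by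
  obtain ⟨X, rfl⟩ := CStarAlgebra.nonneg_iff_eq_star_mul_self.mp hM.nonneg
  rw [star_eq_conjTranspose, Matrix.mul_assoc, trace_mul_comm]
  exact (hN.mul_mul_conjTranspose_same X).trace_nonneg

theorem PosSemidef.norm_trace_mul_le {M K : Matrix n n ℂ} (hM : M.PosSemidef)
    (hK : K.IsHermitian) : ‖(M * K).trace‖ ≤ ‖K‖ * M.trace.re := by
  have hupper := hM.trace_mul_nonneg (nonneg_iff_posSemidef.mp
    (sub_nonneg.mpr (IsSelfAdjoint.le_algebraMap_norm_self hK)))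
  have hlower := hM.trace_mul_nonneg (nonneg_iff_posSemidef.mp
    (neg_le_iff_add_nonneg.mp (IsSelfAdjoint.neg_algebraMap_norm_le_self hK)))
  simp only [Matrix.mul_sub, Matrix.mul_add, trace_sub, trace_add,
    Algebra.algebraMap_eq_smul_one, Matrix.mul_smul, Matrix.mul_one, trace_smul] at hupper hlower
  have htr := hM.trace_nonneg
  simp only [Complex.nonneg_iff, Complex.sub_re, Complex.sub_im, Complex.add_re, Complex.add_im,
    Complex.real_smul, Complex.re_ofReal_mul, Complex.im_ofReal_mul] at hupper hlower htr
  rw [← Complex.abs_re_eq_norm.mpr (by linarith), abs_le]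
  constructor <;> linarith

end Hermitian

section KroneckerOne

variable {m : Type*} (n : Type*) [DecidableEq n] {R : Type*}

/-- `φ ⊗ₖ 1`, with the column index `Unit × n` identified with `n`. -/
def vecKronOne [Zero R] (φ : m → R) : Matrix (m × n) n R :=
  of fun p r => if p.2 = r then φ p.1 else 0

variable {n} [DecidableEq m]

theorem one_kronecker_smul_one_sub [CommRing R] (c : R) (H : Matrix n n R) :
    (1 : Matrix m m R) ⊗ₖ (c • 1 - H) = c • 1 - 1 ⊗ₖ H := by
  ext ⟨i, k⟩ ⟨j, q⟩
  by_cases hij : i = j <;> simp [hij, one_apply, mul_sub]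

variable [CommSemiring R]

omit [DecidableEq n] in
theorem isHermitian_one_kronecker [StarRing R] {K : Matrix n n R} (hK : K.IsHermitian) :
    ((1 : Matrix m m R) ⊗ₖ K).IsHermitian := by
  rw [IsHermitian, conjTranspose_kronecker, conjTranspose_one, hK.eq]

variable [Fintype m] [Fintype n]

theorem one_kronecker_mul_vecKronOne (K : Matrix n n R) (φ : m → R) :
    ((1 : Matrix m m R) ⊗ₖ K) * vecKronOne n φ = vecKronOne n φ * K := by
  ext ⟨i, k⟩ r
  simp [vecKronOne, mul_apply, one_apply, Fintype.sum_prod_type, kroneckerMap_apply, mul_comm]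

theorem conjTranspose_vecKronOne_mul_one_kronecker [StarRing R] (K : Matrix n n R) (φ : m → R) :
    (vecKronOne n φ)ᴴ * ((1 : Matrix m m R) ⊗ₖ K) = K * (vecKronOne n φ)ᴴ := by
  simpa [conjTranspose_kronecker] using
    congrArg conjTranspose (one_kronecker_mul_vecKronOne Kᴴ φ)

end KroneckerOne

end Matrix

open Matrix

section PartialTrace

variable {a b : ℕ}

theorem ptraceB_add (X Y : Matrix (Fin a × Fin b) (Fin a × Fin b) ℂ) :
    ptraceB (X + Y) = ptraceB X + ptraceB Y := by
  ext i j
  simp [ptraceB, Finset.sum_add_distrib]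

theorem ptraceB_conjTranspose (X : Matrix (Fin a × Fin b) (Fin a × Fin b) ℂ) :
    ptraceB Xᴴ = (ptraceB X)ᴴ := by
  ext i j
  simp [ptraceB]

theorem Matrix.IsHermitian.ptraceB_anticommutator {ω : Matrix (Fin a × Fin b) (Fin a × Fin b) ℂ}
    (hω : ω.IsHermitian) {K : Matrix (Fin b) (Fin b) ℂ} (hK : K.IsHermitian) :
    (ptraceB ((1 ⊗ₖ K) * ω + ω * (1 ⊗ₖ K))).IsHermitian := by
  rw [IsHermitian, ← ptraceB_conjTranspose, conjTranspose_add, conjTranspose_mul,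
    conjTranspose_mul, hω.eq, (isHermitian_one_kronecker hK).eq, add_comm]

theorem dotProduct_ptraceB_mulVec (Y : Matrix (Fin a × Fin b) (Fin a × Fin b) ℂ)
    (φ ψ : Fin a → ℂ) :
    star φ ⬝ᵥ ptraceB Y *ᵥ ψ = ((vecKronOne (Fin b) φ)ᴴ * Y * vecKronOne (Fin b) ψ).trace := by
  simp only [trace, diag_apply, mul_apply, conjTranspose_apply, vecKronOne, of_apply,
    Fintype.sum_prod_type, apply_ite (star : ℂ → ℂ), star_zero, ite_mul, zero_mul,
    mul_ite, mul_zero, Finset.sum_ite_eq', Finset.mem_univ, if_true,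
    dotProduct, mulVec, ptraceB, Finset.mul_sum, Finset.sum_mul, Pi.star_apply]
  rw [Finset.sum_comm]
  conv_rhs => rw [Finset.sum_comm]; enter [2, c]; rw [Finset.sum_comm]
  simp only [mul_assoc]

theorem dotProduct_ptraceB_anticommutator (ω : Matrix (Fin a × Fin b) (Fin a × Fin b) ℂ)
    (K : Matrix (Fin b) (Fin b) ℂ) (φ : Fin a → ℂ) :
    star φ ⬝ᵥ ptraceB ((1 ⊗ₖ K) * ω + ω * (1 ⊗ₖ K)) *ᵥ φ =
      2 * ((vecKronOne (Fin b) φ)ᴴ * ω * vecKronOne (Fin b) φ * K).trace := by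
  rw [ptraceB_add, add_mulVec, dotProduct_add, dotProduct_ptraceB_mulVec,
    dotProduct_ptraceB_mulVec]
  simp only [Matrix.mul_assoc]
  rw [one_kronecker_mul_vecKronOne, ← Matrix.mul_assoc _ (1 ⊗ₖ K),
    conjTranspose_vecKronOne_mul_one_kronecker, Matrix.mul_assoc K, trace_mul_comm K]
  simp only [Matrix.mul_assoc]
  ring

theorem norm_dotProduct_half_ptraceB_anticommutator_le
    {ω : Matrix (Fin a × Fin b) (Fin a × Fin b) ℂ} (hω : ω.PosSemidef)
    {K : Matrix (Fin b) (Fin b) ℂ} (hK : K.IsHermitian) (φ : Fin a → ℂ) :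
    ‖star φ ⬝ᵥ ((1 / 2 : ℂ) • ptraceB ((1 ⊗ₖ K) * ω + ω * (1 ⊗ₖ K))) *ᵥ φ‖ ≤
      ‖K‖ * (star φ ⬝ᵥ ptraceB ω *ᵥ φ).re := by
  rw [smul_mulVec, dotProduct_smul, smul_eq_mul, dotProduct_ptraceB_anticommutator, ← mul_assoc,
    one_div, inv_mul_cancel₀ two_ne_zero, one_mul, dotProduct_ptraceB_mulVec]
  exact PosSemidef.norm_trace_mul_le (hω.conjTranspose_mul_mul_same _) hK

end PartialTrace

theorem sandwiched_op_norm_le_general {a b : ℕ}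
    (ω : Matrix (Fin a × Fin b) (Fin a × Fin b) ℂ)
    (S : Matrix (Fin a) (Fin a) ℂ) (HB : Matrix (Fin b) (Fin b) ℂ) (J : ℝ)
    (Hfull : Matrix (Fin a × Fin b) (Fin a × Fin b) ℂ) (e : ℂ)
    (Bhat : Matrix (Fin a) (Fin a) ℂ)
    (hω : ω.PosDef)
    (hS : S.PosDef) (hSS : ptraceB ω * (S * S) = 1)
    (hHB : HB.IsHermitian)
    (hHfull : Hfull = (1 : Matrix (Fin a) (Fin a) ℂ) ⊗ₖ HB)
    (he : e = (Hfull * ω).trace)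
    (hbound : ‖e • (1 : Matrix (Fin b) (Fin b) ℂ) - HB‖ ≤ 2 * J)
    (hBhat :
      Bhat = (1 / 2 : ℂ) •
        ptraceB ((e • (1 : Matrix (Fin a × Fin b) (Fin a × Fin b) ℂ) - Hfull) * ω +
          ω * (e • (1 : Matrix (Fin a × Fin b) (Fin a × Fin b) ℂ) - Hfull))) :
    ‖S * Bhat * S‖ ≤ 2 * J := by
  set K := e • (1 : Matrix (Fin b) (Fin b) ℂ) - HB
  have he_real : IsSelfAdjoint e :=
    he ▸ (hHfull ▸ isHermitian_one_kronecker hHB).isSelfAdjoint_trace_mul hω.1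
  have hK : K.IsHermitian := (isHermitian_one.smul he_real).sub hHB
  rw [hHfull, ← one_kronecker_smul_one_sub] at hBhat
  have hSBS : (S * Bhat * S).IsHermitian := by
    have hBhatH : Bhat.IsHermitian :=
      hBhat ▸ (hω.1.ptraceB_anticommutator hK).smul (by norm_num [IsSelfAdjoint])
    simpa only [hS.1.eq] using isHermitian_conjTranspose_mul_mul S hBhatH
  have hSρS : S * ptraceB ω * S = 1 := by
    rw [Matrix.mul_assoc, mul_eq_one_comm, Matrix.mul_assoc, hSS]
  refine hSBS.norm_le_of_forall_norm_dotProduct_le ((norm_nonneg _).trans hbound) fun ψ => ?_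
  rw [hS.1.star_dotProduct_mul_mul_mulVec, hBhat]
  calc _ ≤ ‖K‖ * (star (S *ᵥ ψ) ⬝ᵥ ptraceB ω *ᵥ (S *ᵥ ψ)).re :=
        norm_dotProduct_half_ptraceB_anticommutator_le hω.posSemidef hK _
    _ = ‖K‖ * (star ψ ⬝ᵥ ψ).re := by
        rw [← hS.1.star_dotProduct_mul_mul_mulVec, hSρS, one_mulVec]
    _ ≤ 2 * J * (star ψ ⬝ᵥ ψ).re :=
        mul_le_mul_of_nonneg_right hbound (Complex.nonneg_iff.mp (dotProduct_star_self_nonneg ψ)).1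

/-- If ω is a faithful state on H_A ⊗ H_B with reduced state ρ = Tr_B ω,
    S = ρ^{-1/2}, and H = 1 ⊗ HB acts only on B with ‖⟨H⟩I − H‖_∞ ≤ 2J, then
    B̂ = ½Tr_B{⟨H⟩I − H, ω} satisfies ‖ρ^{-1/2} B̂ ρ^{-1/2}‖_∞ ≤ 2J. -/
theorem sandwiched_op_norm_le {a b : ℕ}
    (ω : Matrix (Fin a × Fin b) (Fin a × Fin b) ℂ)
    (S : Matrix (Fin a) (Fin a) ℂ) (HB : Matrix (Fin b) (Fin b) ℂ) (J : ℝ)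
    (Hfull : Matrix (Fin a × Fin b) (Fin a × Fin b) ℂ) (e : ℂ)
    (Bhat : Matrix (Fin a) (Fin a) ℂ)
    (hω : ω.PosDef) (htr : ω.trace = 1)
    (hS : S.PosDef) (hSS : ptraceB ω * (S * S) = 1)
    (hHB : HB.IsHermitian)
    (hHfull : Hfull = (1 : Matrix (Fin a) (Fin a) ℂ) ⊗ₖ HB)
    (he : e = (Hfull * ω).trace)
    (hbound : ‖e • (1 : Matrix (Fin b) (Fin b) ℂ) - HB‖ ≤ 2 * J)
    (hBhat :
      Bhat = (1 / 2 : ℂ) •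
        ptraceB ((e • (1 : Matrix (Fin a × Fin b) (Fin a × Fin b) ℂ) - Hfull) * ω +
          ω * (e • (1 : Matrix (Fin a × Fin b) (Fin a × Fin b) ℂ) - Hfull))) :
    ‖S * Bhat * S‖ ≤ 2 * J :=
  sandwiched_op_norm_le_general ω S HB J Hfull e Bhat hω hS hSS hHB hHfull he hbound hBhat
end

section
/- Let ω be the Gibbs state e^{-βH}/Tr e^{-βH} of a Hamiltonian H = ∑_{X∈E} H_X on a finite-dimensional Hilbert space, satisfying exponential clustering: for all X,Y, |⟨H_X H_Y⟩ − ⟨H_X⟩⟨H_Y⟩| ≤ 4(ξ+1) N_∂ J² e^{-d(X,Y)/ξ}, where J = max_X ‖H_X‖_∞. Suppose moreover |{Y ∈ E : d(X,Y) = n}| ≤ M(n+1)² for all X and n. Then for any subset G ⊆ E, Var(∑_{X∈G} H_X) ≤ 8 N_∂ J² |G| M (ξ+1)⁴. -/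
/-!
The variance of `H_G` is the double sum over `X, Y ∈ G` of the covariances of `H_X` and `H_Y`,
each bounded by clustering by `C q^{d(X,Y)}` with `C = 4(ξ+1)N_∂J²` and `q = e^{-1/ξ}`. Grouping the
`Y` by their distance `m` from `X`, at most `M(m+1)²` of them contribute `C qᵐ`, and
`∑ₘ (m+1)² qᵐ ≤ 2/(1-q)³ ≤ 2(ξ+1)³` because `1 - e^{-1/ξ} ≥ 1/(ξ+1)`.
-/

open Finset
open scoped ComplexOrder Matrix.Norms.L2Operator

/-- The Gibbs state ω(β) = e^{-βH}/Tr e^{-βH}. -/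
noncomputable def gibbs {n : ℕ} (H : Matrix (Fin n) (Fin n) ℂ) (β : ℝ) :
    Matrix (Fin n) (Fin n) ℂ :=
  ((NormedSpace.exp ((-β : ℂ) • H)).trace)⁻¹ • NormedSpace.exp ((-β : ℂ) • H)

namespace Matrix

variable {m R : Type*} [Fintype m] [CommRing R]

def stateCovariance (ω A B : Matrix m m R) : R :=
  (A * B * ω).trace - (A * ω).trace * (B * ω).trace

lemma stateCovariance_sum_sum {ι κ : Type*} (ω : Matrix m m R) (A : ι → Matrix m m R)
    (B : κ → Matrix m m R) (s : Finset ι) (t : Finset κ) :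
    stateCovariance ω (∑ i ∈ s, A i) (∑ j ∈ t, B j) =
      ∑ i ∈ s, ∑ j ∈ t, stateCovariance ω (A i) (B j) := by
  simp only [stateCovariance, sum_mul, mul_sum, trace_sum, sum_sub_distrib]
  rw [sum_comm (s := t), sum_comm (s := t)]

end Matrix

lemma sum_sq_succ_mul_pow_le {q : ℝ} (hq0 : 0 ≤ q) (hq1 : q < 1) (s : Finset ℕ) :
    ∑ m ∈ s, ((m : ℝ) + 1) ^ 2 * q ^ m ≤ 2 / (1 - q) ^ 3 := by
  -- `(m+1)² ≤ (m+2)(m+1) = 2·C(m+2, 2)`, and `∑ C(m+2, 2) qᵐ = (1-q)⁻³`.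
  have hsum : HasSum (fun m : ℕ ↦ 2 * (((m + 2).choose 2 : ℕ) : ℝ) * q ^ m) (2 / (1 - q) ^ 3) := by
    have := (hasSum_choose_mul_geometric_of_norm_lt_one 2
      (by rwa [Real.norm_of_nonneg hq0] : ‖q‖ < 1)).mul_left 2
    simpa only [mul_assoc, mul_one_div] using this
  calc ∑ m ∈ s, ((m : ℝ) + 1) ^ 2 * q ^ m
      ≤ ∑ m ∈ s, 2 * (((m + 2).choose 2 : ℕ) : ℝ) * q ^ m := by
        gcongr with m
        rw [Nat.cast_choose_two]
        push_cast
        nlinarith [m.cast_nonneg (α := ℝ)]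
    _ ≤ 2 / (1 - q) ^ 3 := sum_le_hasSum s (fun m _ ↦ by positivity) hsum

lemma inv_one_sub_exp_neg_inv_le {ξ : ℝ} (hξ : 0 < ξ) : (1 - Real.exp (-ξ⁻¹))⁻¹ ≤ ξ + 1 := by
  have hexp : ξ⁻¹ + 1 ≤ Real.exp ξ⁻¹ := Real.add_one_le_exp _
  have hq : Real.exp (-ξ⁻¹) ≤ 1 - (ξ + 1)⁻¹ :=
    calc Real.exp (-ξ⁻¹) = (Real.exp ξ⁻¹)⁻¹ := Real.exp_neg _
      _ ≤ (ξ⁻¹ + 1)⁻¹ := inv_anti₀ (by positivity) hexp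
      _ = 1 - (ξ + 1)⁻¹ := by field_simp; ring
  have hpos : 0 < (ξ + 1)⁻¹ := by positivity
  rw [inv_le_comm₀ (by linarith) (by positivity)]
  linarith

lemma sum_pow_le_of_card_fiber_le {ι : Type*} (s : Finset ι) (f : ι → ℕ) {M q : ℝ}
    (hM : 0 ≤ M) (hq0 : 0 ≤ q) (hq1 : q < 1)
    (hcard : ∀ m : ℕ, (#{y ∈ s | f y = m} : ℝ) ≤ M * (m + 1) ^ 2) :
    ∑ y ∈ s, q ^ f y ≤ 2 * M / (1 - q) ^ 3 := by
  rw [sum_comp (fun m ↦ q ^ m) f]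
  calc ∑ m ∈ s.image f, #{y ∈ s | f y = m} • q ^ m
      ≤ ∑ m ∈ s.image f, M * (((m : ℝ) + 1) ^ 2 * q ^ m) := by
        gcongr with m
        rw [nsmul_eq_mul, ← mul_assoc]
        gcongr
        exact hcard m
    _ ≤ M * (2 / (1 - q) ^ 3) := by
        rw [← mul_sum]
        gcongr
        exact sum_sq_succ_mul_pow_le hq0 hq1 _
    _ = 2 * M / (1 - q) ^ 3 := by ring

lemma sum_exp_neg_div_le_of_card_fiber_le {ι : Type*} (s : Finset ι) (f : ι → ℕ) {M ξ : ℝ}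
    (hM : 0 ≤ M) (hξ : 0 < ξ)
    (hcard : ∀ m : ℕ, (#{y ∈ s | f y = m} : ℝ) ≤ M * (m + 1) ^ 2) :
    ∑ y ∈ s, Real.exp (-(f y : ℝ) / ξ) ≤ 2 * M * (ξ + 1) ^ 3 := by
  set q := Real.exp (-ξ⁻¹)
  have hq1 : q < 1 := Real.exp_lt_one_iff.2 (by simpa using hξ)
  have hpow : ∀ y, Real.exp (-(f y : ℝ) / ξ) = q ^ f y := fun y ↦ by
    rw [← Real.exp_nat_mul]
    ring_nf
  calc ∑ y ∈ s, Real.exp (-(f y : ℝ) / ξ) = ∑ y ∈ s, q ^ f y := sum_congr rfl fun y _ ↦ hpow y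
    _ ≤ 2 * M / (1 - q) ^ 3 := sum_pow_le_of_card_fiber_le s f hM (Real.exp_nonneg _) hq1 hcard
    _ = 2 * M * (1 - q)⁻¹ ^ 3 := by rw [inv_pow, div_eq_mul_inv]
    _ ≤ 2 * M * (ξ + 1) ^ 3 := by
        have : 0 ≤ (1 - q)⁻¹ := inv_nonneg.2 (by linarith)
        gcongr
        exact inv_one_sub_exp_neg_inv_le hξ

theorem variance_local_hamiltonian_general {n : ℕ} {ι : Type*}
    (E G : Finset ι) (Hs : ι → Matrix (Fin n) (Fin n) ℂ)
    (d : ι → ι → ℕ) (ξ J M Npartial : ℝ)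
    (ω : Matrix (Fin n) (Fin n) ℂ)
    (hG : G ⊆ E) (hξ : 0 < ξ) (hM : 0 ≤ M) (hNp : 0 ≤ Npartial)
    (hcluster : ∀ X ∈ E, ∀ Y ∈ E,
      ‖(Hs X * Hs Y * ω).trace - (Hs X * ω).trace * (Hs Y * ω).trace‖ ≤
        4 * (ξ + 1) * Npartial * J ^ 2 * Real.exp (-(d X Y : ℝ) / ξ))
    (hcount : ∀ X ∈ E, ∀ m : ℕ,
      ((E.filter fun Y => d X Y = m).card : ℝ) ≤ M * (m + 1) ^ 2) :
    ‖((∑ X ∈ G, Hs X) * (∑ X ∈ G, Hs X) * ω).trace -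
          ((∑ X ∈ G, Hs X) * ω).trace ^ 2‖ ≤
      8 * Npartial * J ^ 2 * G.card * M * (ξ + 1) ^ 4 := by
  set C := 4 * (ξ + 1) * Npartial * J ^ 2
  have hC : 0 ≤ C := by positivity
  calc ‖((∑ X ∈ G, Hs X) * (∑ X ∈ G, Hs X) * ω).trace - ((∑ X ∈ G, Hs X) * ω).trace ^ 2‖
      = ‖∑ X ∈ G, ∑ Y ∈ G, Matrix.stateCovariance ω (Hs X) (Hs Y)‖ := by
        rw [← Matrix.stateCovariance_sum_sum, Matrix.stateCovariance, sq]
    _ ≤ ∑ X ∈ G, ∑ Y ∈ G, ‖Matrix.stateCovariance ω (Hs X) (Hs Y)‖ :=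
        (norm_sum_le _ _).trans (sum_le_sum fun X _ ↦ norm_sum_le _ _)
    _ ≤ ∑ X ∈ G, ∑ Y ∈ E, C * Real.exp (-(d X Y : ℝ) / ξ) :=
        sum_le_sum fun X hX ↦
          (sum_le_sum fun Y hY ↦ hcluster X (hG hX) Y (hG hY)).trans
            (sum_le_sum_of_subset_of_nonneg hG fun _ _ _ ↦ by positivity)
    _ ≤ ∑ X ∈ G, C * (2 * M * (ξ + 1) ^ 3) := by
        gcongr with X hX
        rw [← mul_sum]
        gcongr
        exact sum_exp_neg_div_le_of_card_fiber_le E (d X) hM hξ (hcount X (hG hX))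
    _ = 8 * Npartial * J ^ 2 * G.card * M * (ξ + 1) ^ 4 := by
        rw [sum_const, nsmul_eq_mul]
        ring

/-- Theorem 2 (variance of the local Hamiltonian): if the Gibbs state of
    H = ∑_{X∈E} H_X satisfies exponential clustering
    |⟨H_X H_Y⟩ − ⟨H_X⟩⟨H_Y⟩| ≤ 4(ξ+1)N_∂J² e^{-d(X,Y)/ξ} with J = max_X ‖H_X‖_∞,
    and the number of edges at distance n from any edge is at most M(n+1)², then
    for any G ⊆ E the variance of H_G = ∑_{X∈G} H_X satisfies
    |Var H_G| ≤ 8 N_∂ J² |G| M (ξ+1)⁴. -/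
theorem variance_local_hamiltonian {n : ℕ} {ι : Type*} [DecidableEq ι]
    (E G : Finset ι) (Hs : ι → Matrix (Fin n) (Fin n) ℂ) (β : ℝ)
    (d : ι → ι → ℕ) (ξ J M Npartial : ℝ)
    (ω : Matrix (Fin n) (Fin n) ℂ)
    (hω : ω = gibbs (∑ X ∈ E, Hs X) β)
    (hG : G ⊆ E) (hξ : 0 < ξ) (hM : 0 ≤ M) (hNp : 0 ≤ Npartial)
    (hHerm : ∀ X ∈ E, (Hs X).IsHermitian)
    (hJ : ∀ X ∈ E, ‖Hs X‖ ≤ J)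
    (hd : ∀ X Y, d X Y = d Y X)
    (hcluster : ∀ X ∈ E, ∀ Y ∈ E,
      ‖(Hs X * Hs Y * ω).trace - (Hs X * ω).trace * (Hs Y * ω).trace‖ ≤
        4 * (ξ + 1) * Npartial * J ^ 2 * Real.exp (-(d X Y : ℝ) / ξ))
    (hcount : ∀ X ∈ E, ∀ m : ℕ,
      ((E.filter fun Y => d X Y = m).card : ℝ) ≤ M * (m + 1) ^ 2) :
    ‖((∑ X ∈ G, Hs X) * (∑ X ∈ G, Hs X) * ω).trace -
          ((∑ X ∈ G, Hs X) * ω).trace ^ 2‖ ≤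
      8 * Npartial * J ^ 2 * G.card * M * (ξ + 1) ^ 4 :=
  variance_local_hamiltonian_general E G Hs d ξ J M Npartial ω hG hξ hM hNp hcluster hcount
end
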